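/- For each fixed b < 0 and each n ≥ 2, the real roots of a ↦ P_{n+1}(a,b) and a ↦ P_n(a,b) strictly interlace: between any two consecutive roots of P_{n+1}(·,b) lies exactly one root of P_n(·,b), and P_{n+1}(·,b) has exactly one more root than P_n(·,b). -/

import Mathlib

/-!
Write `b = -c²` with `c > 0`. Substituting `a = -2c cos φ` turns the recurrence into the
one satisfied by `(-c)ⁿ sin ((n+1)φ) / sin φ`, so the roots of `Pr (n+1) · b` with `|a| < 2c`
are `-2c cos (kπ/(n+1))`, `k = 1, …, n`; for `|a| ≥ 2c` the values `|Pr n a b|` grow by a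
factor `c` at each step and never vanish. Interlacing then reduces to
`k/(n+1) < k/n < (k+1)/(n+1)`, because `cos` is strictly decreasing on `[0, π]`.
-/

/-- `Pr n a b` is defined by `Pr 0 = 0`, `Pr 1 = 1`,
`Pr (n+2) = a * Pr (n+1) + b * Pr n`. -/
def Pr : ℕ → ℝ → ℝ → ℝ
  | 0, _, _ => 0
  | 1, _, _ => 1
  | (n + 2), a, b => a * Pr (n + 1) a b + b * Pr n a b

open Real

lemma Pr_add_two (n : ℕ) (a b : ℝ) : Pr (n + 2) a b = a * Pr (n + 1) a b + b * Pr n a b := rfl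

lemma Pr_succ_mul_sin (c θ : ℝ) (n : ℕ) :
    Pr (n + 1) (2 * c * cos θ) (-c ^ 2) * sin θ = c ^ n * sin ((n + 1) * θ) := by
  induction n using Nat.twoStepInduction with
  | zero => simp [Pr]
  | one =>
    rw [Pr_add_two, Nat.cast_one, one_add_one_eq_two, sin_two_mul]
    simp only [Pr]
    ring
  | more n ih₀ ih₁ =>
    have sin_rec : sin ((n + 3) * θ) = 2 * cos θ * sin ((n + 2) * θ) - sin ((n + 1) * θ) := by
      rw [show (n + 3) * θ = (n + 2) * θ + θ by ring,
        show (n + 1) * θ = (n + 2) * θ - θ by ring, sin_add, sin_sub]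
      ring
    rw [Pr_add_two]
    push_cast at ih₀ ih₁ ⊢
    rw [show (n : ℝ) + 2 + 1 = n + 3 by ring]
    rw [show (n : ℝ) + 1 + 1 = n + 2 by ring] at ih₁
    linear_combination (2 * c * cos θ) * ih₁ - c ^ 2 * ih₀ - c ^ (n + 2) * sin_rec

lemma Pr_abs_growth_of_two_mul_le_abs {c a : ℝ} (hc : 0 < c) (ha : 2 * c ≤ |a|) (n : ℕ) :
    c * |Pr n a (-c ^ 2)| ≤ |Pr (n + 1) a (-c ^ 2)| ∧ 0 < |Pr (n + 1) a (-c ^ 2)| := by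
  induction n with
  | zero => simp [Pr]
  | succ n ih =>
    obtain ⟨hgrow, hpos⟩ := ih
    have hlower : c * |Pr (n + 1) a (-c ^ 2)| ≤ |Pr (n + 2) a (-c ^ 2)| :=
      calc c * |Pr (n + 1) a (-c ^ 2)|
          ≤ |a| * |Pr (n + 1) a (-c ^ 2)| - c * (c * |Pr n a (-c ^ 2)|) := by nlinarith
        _ ≤ |a * Pr (n + 1) a (-c ^ 2) - c ^ 2 * Pr n a (-c ^ 2)| := by
          rw [← abs_mul, ← mul_assoc, ← sq, ← abs_of_pos (pow_pos hc 2), ← abs_mul,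
            abs_of_pos (pow_pos hc 2)]
          exact abs_sub_abs_le_abs_sub _ _
        _ = |Pr (n + 2) a (-c ^ 2)| := by rw [Pr_add_two]; ring_nf
    exact ⟨hlower, (mul_pos hc hpos).trans_le hlower⟩

lemma Pr_succ_neg_two_mul_cos_eq_zero_iff {c φ : ℝ} (hc : c ≠ 0) (hφ : sin φ ≠ 0)
    (n : ℕ) :
    Pr (n + 1) (-(2 * c * cos φ)) (-c ^ 2) = 0 ↔ sin ((n + 1) * φ) = 0 := by
  have key := Pr_succ_mul_sin (-c) φ n
  rw [neg_sq, mul_neg, neg_mul] at key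
  constructor
  · intro h
    rw [h, zero_mul] at key
    exact (mul_eq_zero.1 key.symm).resolve_left (pow_ne_zero _ (neg_ne_zero.2 hc))
  · intro h
    rw [h, mul_zero] at key
    exact (mul_eq_zero.1 key).resolve_right hφ

lemma sin_nat_succ_mul_eq_zero_iff {φ : ℝ} (hφ : φ ∈ Set.Ioo 0 π) (n : ℕ) :
    sin ((n + 1) * φ) = 0 ↔ ∃ i : Fin n, φ = (i + 1) / (n + 1) * π := by
  constructor
  · intro h
    obtain ⟨k, hk⟩ := sin_eq_zero_iff.1 h
    have hk_pos : (0 : ℝ) < k := by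
      have : 0 < (k : ℝ) * π := by rw [hk]; exact mul_pos (by positivity) hφ.1
      exact pos_of_mul_pos_left this pi_pos.le
    have hk_lt : (k : ℝ) < n + 1 := by
      have : (k : ℝ) * π < (n + 1) * π := by rw [hk]; gcongr; exact hφ.2
      exact lt_of_mul_lt_mul_right this pi_pos.le
    lift k to ℕ using by exact_mod_cast hk_pos.le
    norm_cast at hk_pos hk_lt
    refine ⟨⟨k - 1, by omega⟩, ?_⟩
    push_cast [Nat.cast_pred hk_pos] at hk ⊢
    field_simp
    linear_combination -hk
  · rintro ⟨i, rfl⟩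
    rw [← mul_assoc, mul_div_cancel₀ _ (by positivity)]
    exact_mod_cast sin_nat_mul_pi (i + 1)

/-- The `i`-th smallest root of `a ↦ Pr (n + 1) a (-c ^ 2)`, for `i < n`. -/
noncomputable def prRoot (c : ℝ) (n i : ℕ) : ℝ := -(2 * c * cos ((i + 1) / (n + 1) * π))

lemma Pr_succ_eq_zero_iff {c : ℝ} (hc : 0 < c) {n : ℕ} {a : ℝ} :
    Pr (n + 1) a (-c ^ 2) = 0 ↔ ∃ i : Fin n, a = prRoot c n i := by
  constructor
  · intro h
    have ha : |a| < 2 * c := by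
      by_contra! ha
      exact (Pr_abs_growth_of_two_mul_le_abs hc ha n).2.ne' (by rw [h, abs_zero])
    obtain ⟨ha₁, ha₂⟩ := abs_lt.1 ha
    have hx₁ : -1 < -a / (2 * c) := by rw [lt_div_iff₀ (by positivity)]; linarith
    have hx₂ : -a / (2 * c) < 1 := by rw [div_lt_one (by positivity)]; linarith
    set φ := arccos (-a / (2 * c))
    have hφ : φ ∈ Set.Ioo 0 π := ⟨arccos_pos.2 hx₂, arccos_lt_pi.2 hx₁⟩
    have ha_eq : a = -(2 * c * cos φ) := by
      rw [cos_arccos hx₁.le hx₂.le]; field_simp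
    rw [ha_eq, Pr_succ_neg_two_mul_cos_eq_zero_iff hc.ne' (sin_pos_of_mem_Ioo hφ).ne',
      sin_nat_succ_mul_eq_zero_iff hφ] at h
    obtain ⟨i, hi⟩ := h
    exact ⟨i, by rw [ha_eq, hi, prRoot]⟩
  · rintro ⟨i, rfl⟩
    have hφ : (i + 1) / (n + 1) * π ∈ Set.Ioo 0 π := by
      constructor
      · positivity
      · refine mul_lt_of_lt_one_left pi_pos ((div_lt_one (by positivity)).2 ?_)
        exact_mod_cast Nat.succ_lt_succ i.isLt
    rw [prRoot, Pr_succ_neg_two_mul_cos_eq_zero_iff hc.ne' (sin_pos_of_mem_Ioo hφ).ne',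
      sin_nat_succ_mul_eq_zero_iff hφ]
    exact ⟨i, rfl⟩

lemma prRoot_lt_prRoot {c : ℝ} (hc : 0 < c) {n m i j : ℕ}
    (h : ((i : ℝ) + 1) / (n + 1) < ((j : ℝ) + 1) / (m + 1)) (hj : j ≤ m) :
    prRoot c n i < prRoot c m j := by
  have hj_le : ((j : ℝ) + 1) / (m + 1) ≤ 1 :=
    (div_le_one (by positivity)).2 (by exact_mod_cast Nat.succ_le_succ hj)
  refine neg_lt_neg (mul_lt_mul_of_pos_left
    (cos_lt_cos_of_nonneg_of_le_pi (by positivity) ?_ ?_) (by positivity))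
  · exact mul_le_of_le_one_left pi_pos.le hj_le
  · exact mul_lt_mul_of_pos_right h pi_pos

theorem stmt_12 (b : ℝ) (hb : b < 0) (n : ℕ) (hn : 2 ≤ n) :
    ∃ (α : Fin n → ℝ) (β : Fin (n - 1) → ℝ),
      StrictMono α ∧ StrictMono β ∧
      (∀ a : ℝ, Pr (n + 1) a b = 0 ↔ ∃ i, a = α i) ∧
      (∀ a : ℝ, Pr n a b = 0 ↔ ∃ j, a = β j) ∧
      ∀ j : Fin (n - 1),
        α (Fin.castLE (by omega) j) < β j ∧
          β j < α ⟨j.val + 1, by omega⟩ := by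
  obtain ⟨c, hc, rfl⟩ : ∃ c, 0 < c ∧ b = -c ^ 2 :=
    ⟨√(-b), sqrt_pos.2 (neg_pos.2 hb), by rw [sq_sqrt (by linarith), neg_neg]⟩
  obtain ⟨m, rfl⟩ : ∃ m, n = m + 1 := ⟨n - 1, by omega⟩
  refine ⟨fun i => prRoot c (m + 1) i, fun j => prRoot c m j, fun i i' h => ?_,
    fun j j' h => ?_, fun a => Pr_succ_eq_zero_iff hc, fun a => Pr_succ_eq_zero_iff hc,
    fun j => ⟨?_, ?_⟩⟩
  · refine prRoot_lt_prRoot hc ?_ (by omega)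
    gcongr
    exact_mod_cast h
  · refine prRoot_lt_prRoot hc ?_ (by omega)
    gcongr
    exact_mod_cast h
  · refine prRoot_lt_prRoot hc ?_ (by omega)
    simp only [Fin.val_castLE]
    gcongr
    linarith
  · have hj : (j : ℝ) < m := by exact_mod_cast (by omega : (j : ℕ) < m)
    refine prRoot_lt_prRoot hc ?_ (by omega)
    rw [div_lt_div_iff₀ (by positivity) (by positivity)]
    push_cast
    nlinarith
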